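/- arXiv:2208.01229 — 4 statements merged into one kernel-verified Lean document; each statement's English description precedes it below -/
import Mathlib

section
/- Let k' be a squarefree odd positive integer with exactly L prime factors, and let B > 0. Then ∑_{d | k'} ∑_{e | d} ∑_{a ≤ B√(e/d), gcd(a,d) = e} μ(a)² ≤ B · ((4 + √3)/3)^L, where μ is the Möbius function. -/
/-!
Only the divisibility `e ∣ a` is used from `gcd a d = e`, and `μ(a)² ≤ 1`, so the inner sum is at
most `⌊B √(e/d)⌋ / e ≤ B / √(e d)`. The resulting bound `B ∑_{d ∣ k'} ∑_{e ∣ d} (e d)^{-1/2}` is a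
divisor sum of a multiplicative function, hence a product over the primes `p ∣ k'` of
`1 + 1/√p + 1/p`, and each factor is at most `1 + 1/√3 + 1/3 = (4 + √3)/3` because `p ≥ 3`.
-/

open ArithmeticFunction Finset
open scoped ArithmeticFunction.zeta ArithmeticFunction.Moebius

theorem card_filter_gcd_eq_le (N d e : ℕ) : #{a ∈ Icc 1 N | a.gcd d = e} ≤ N / e := by
  rw [← Nat.Ioc_filter_dvd_card_eq_div]
  refine card_le_card fun a ha => ?_
  simp only [mem_filter, mem_Icc, mem_Ioc] at ha ⊢
  exact ⟨⟨ha.1.1, ha.1.2⟩, ha.2 ▸ Nat.gcd_dvd_left a d⟩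

theorem sum_moebius_sq_filter_gcd_eq_le (N d e : ℕ) :
    ∑ a ∈ Icc 1 N with a.gcd d = e, (μ a : ℝ) ^ 2 ≤ (N / e : ℕ) := by
  calc ∑ a ∈ Icc 1 N with a.gcd d = e, (μ a : ℝ) ^ 2
      ≤ ∑ a ∈ Icc 1 N with a.gcd d = e, 1 := by
        refine sum_le_sum fun a _ => ?_
        rw [sq_le_one_iff_abs_le_one]
        exact_mod_cast abs_moebius_le_one
    _ ≤ (N / e : ℕ) := by
        rw [sum_const, nsmul_one]
        exact_mod_cast card_filter_gcd_eq_le N d e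

theorem floor_mul_sqrt_div_div_le {B : ℝ} (hB : 0 ≤ B) (d e : ℕ) :
    ((⌊B * √((e : ℝ) / d)⌋₊ / e : ℕ) : ℝ) ≤ B * ((√d)⁻¹ * (√e)⁻¹) :=
  calc ((⌊B * √((e : ℝ) / d)⌋₊ / e : ℕ) : ℝ) ≤ B * √((e : ℝ) / d) / e := by
        refine Nat.cast_div_le.trans ?_
        gcongr
        exact Nat.floor_le (by positivity)
    _ = B * ((√d)⁻¹ * (√e)⁻¹) := by
        rw [Real.sqrt_div' _ d.cast_nonneg, mul_div_assoc, div_right_comm, Real.sqrt_div_self',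
          one_div, div_eq_mul_inv, mul_comm (√(e : ℝ))⁻¹]

noncomputable def invSqrt : ArithmeticFunction ℝ := ⟨fun n => (√n)⁻¹, by simp⟩

theorem invSqrt_apply (n : ℕ) : invSqrt n = (√n)⁻¹ := rfl

theorem isMultiplicative_invSqrt : invSqrt.IsMultiplicative := by
  refine ⟨by simp [invSqrt_apply], fun {m n} _ => ?_⟩
  simp only [invSqrt_apply, Nat.cast_mul, Real.sqrt_mul (Nat.cast_nonneg m), mul_inv]

noncomputable def divisorWeight : ArithmeticFunction ℝ := invSqrt.pmul (ζ * invSqrt)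

theorem divisorWeight_apply (d : ℕ) :
    divisorWeight d = ∑ e ∈ d.divisors, (√d)⁻¹ * (√e)⁻¹ := by
  simp only [divisorWeight, pmul_apply, coe_zeta_mul_apply, invSqrt_apply, mul_sum]

theorem isMultiplicative_divisorWeight : divisorWeight.IsMultiplicative :=
  isMultiplicative_invSqrt.pmul (isMultiplicative_zeta.natCast.mul isMultiplicative_invSqrt)

theorem divisorWeight_prime {p : ℕ} (hp : p.Prime) : divisorWeight p = (√p)⁻¹ + (p : ℝ)⁻¹ := by
  rw [divisorWeight_apply, hp.divisors, sum_pair hp.one_lt.ne, Nat.cast_one, Real.sqrt_one,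
    inv_one, mul_one, ← mul_inv, Real.mul_self_sqrt p.cast_nonneg]

theorem one_add_divisorWeight_le {p : ℕ} (hp : p.Prime) (hodd : Odd p) :
    1 + divisorWeight p ≤ (4 + √3) / 3 := by
  have h3 : (3 : ℝ) ≤ p := by
    have := hp.two_le
    obtain ⟨c, rfl⟩ := hodd
    exact_mod_cast (by omega : 3 ≤ 2 * c + 1)
  have hsqrt3 : (√3)⁻¹ = √3 / 3 := by
    rw [inv_eq_one_div, div_eq_div_iff (by positivity) (by norm_num), one_mul,
      Real.mul_self_sqrt (by norm_num)]
  rw [divisorWeight_prime hp]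
  calc 1 + ((√p)⁻¹ + (p : ℝ)⁻¹) ≤ 1 + ((√3)⁻¹ + (3 : ℝ)⁻¹) := by
        gcongr
    _ = (4 + √3) / 3 := by rw [hsqrt3]; ring

theorem sum_divisors_divisorWeight_le {n : ℕ} (hsq : Squarefree n) (hodd : Odd n) :
    ∑ d ∈ n.divisors, divisorWeight d ≤ ((4 + √3) / 3) ^ n.primeFactors.card := by
  rw [← isMultiplicative_divisorWeight.prodPrimeFactors_one_add_of_squarefree hsq, ← prod_const]
  refine prod_le_prod (fun p hp => ?_) fun p hp => ?_
  · rw [divisorWeight_prime (Nat.prime_of_mem_primeFactors hp)]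
    positivity
  · exact one_add_divisorWeight_le (Nat.prime_of_mem_primeFactors hp)
      (hodd.of_dvd_nat (Nat.dvd_of_mem_primeFactors hp))

open ArithmeticFunction in
theorem divisor_triple_sum_moebius_bound_general (k' L : ℕ) (B : ℝ)
    (hsq : Squarefree k') (hodd : Odd k') (hL : k'.primeFactors.card = L) (hB : 0 < B) :
    ∑ d ∈ k'.divisors, ∑ e ∈ d.divisors,
        ∑ a ∈ (Finset.Icc 1 ⌊B * Real.sqrt ((e : ℝ) / d)⌋₊).filter (fun a => Nat.gcd a d = e),
          ((moebius a : ℝ)) ^ 2 ≤ B * ((4 + Real.sqrt 3) / 3) ^ L := by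
  calc _ ≤ ∑ d ∈ k'.divisors, ∑ e ∈ d.divisors, B * ((√d)⁻¹ * (√e)⁻¹) :=
        sum_le_sum fun d _ => sum_le_sum fun e _ =>
          (sum_moebius_sq_filter_gcd_eq_le _ d e).trans (floor_mul_sqrt_div_div_le hB.le d e)
    _ = B * ∑ d ∈ k'.divisors, divisorWeight d := by simp only [divisorWeight_apply, mul_sum]
    _ ≤ B * ((4 + √3) / 3) ^ L := by
        gcongr
        exact hL ▸ sum_divisors_divisorWeight_le hsq hodd

open ArithmeticFunction in
theorem divisor_triple_sum_moebius_bound (k' L : ℕ) (B : ℝ) (hk : 0 < k')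
    (hsq : Squarefree k') (hodd : Odd k') (hL : k'.primeFactors.card = L) (hB : 0 < B) :
    ∑ d ∈ k'.divisors, ∑ e ∈ d.divisors,
        ∑ a ∈ (Finset.Icc 1 ⌊B * Real.sqrt ((e : ℝ) / d)⌋₊).filter (fun a => Nat.gcd a d = e),
          ((moebius a : ℝ)) ^ 2 ≤ B * ((4 + Real.sqrt 3) / 3) ^ L :=
  divisor_triple_sum_moebius_bound_general k' L B hsq hodd hL hB
end

section
/- For every real x ≥ 8, we have ∑_{a > x} μ(a)²/φ(a²) ≤ ∫_{⌊x⌋}^{∞} (e^γ · log(log t)/t² + 3/t²) dt, where the sum is over integers a > x, μ is the Möbius function, φ is Euler's totient, and γ is the Euler–Mascheroni constant. -/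
/-!
For squarefree `a` we have `φ(a²) = a φ(a)` and, by the Euler product of `ζ(2)`,
`a² = φ(a) σ(a) ∏_{p ∣ a} (1 - p⁻²)⁻¹ ≤ ζ(2) φ(a) σ(a)`. Hence
`μ(a)² / φ(a²) ≤ ζ(2) σ(a) / a³ = ζ(2) ∑_{md = a} 1 / (m³ d²)`, and the tail over `a > N = ⌊x⌋`
is at most `ζ(2)` times the sum of `1 / (m³ d²)` over all pairs with `md > N`. For fixed `m`
the sum over `d` is a tail of `∑ 1 / d²`, which telescopes against `1 / (d - 1/2)`; summing over
`m` (the harmonic sum appears for `m ≤ N`) gives `ζ(2) (ζ(2) + (3 + log N) / N) / N`. For `N ≥ 8`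
this is below `(3 + e^γ log log N) / N`, which is at most the integral because `log log` is
increasing and `∫_N^∞ dt / t² = 1 / N`.
-/

open Real

section Arithmetic

open ArithmeticFunction Finset
open scoped Nat ArithmeticFunction.sigma

lemma Nat.totient_sq (a : ℕ) : φ (a ^ 2) = a * φ a := by
  rcases eq_or_ne a 0 with rfl | ha
  · simp
  have h := Nat.totient_gcd_mul_totient_mul a a
  rw [Nat.gcd_self, ← sq] at h
  exact mul_left_cancel₀ (Nat.totient_pos.2 (Nat.pos_of_ne_zero ha)).ne' (h.trans (by ring))

lemma Nat.totient_eq_prod_primeFactors_sub_one {a : ℕ} (ha : Squarefree a) :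
    φ a = ∏ p ∈ a.primeFactors, (p - 1) := by
  rw [Nat.totient_eq_div_primeFactors_mul, Nat.prod_primeFactors_of_squarefree ha,
    Nat.div_self (Nat.pos_of_ne_zero ha.ne_zero), one_mul]

lemma ArithmeticFunction.sigma_one_eq_prod_primeFactors_add_one {a : ℕ} (ha : Squarefree a) :
    σ 1 a = ∏ p ∈ a.primeFactors, (p + 1) := by
  rw [← isMultiplicative_sigma.prod_primeFactors ha]
  refine prod_congr rfl fun p hp => ?_
  simpa [add_comm] using sigma_one_apply_prime_pow (i := 1) (Nat.prime_of_mem_primeFactors hp)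

lemma prod_filter_prime_inv_one_sub_inv_sq_le (s : Finset ℕ) :
    ∏ p ∈ s with p.Prime, (1 - ((p : ℝ) ^ 2)⁻¹)⁻¹ ≤ π ^ 2 / 6 := by
  let f : ℕ →* ℝ :=
    { toFun := fun n => ((n : ℝ) ^ 2)⁻¹
      map_one' := by simp
      map_mul' := fun m n => by push_cast; ring }
  have hf : HasSum f (π ^ 2 / 6) := by simpa [f, one_div] using hasSum_zeta_two
  change ∏ p ∈ s with p.Prime, (1 - f p)⁻¹ ≤ _
  rw [EulerProduct.prod_filter_prime_geometric_eq_tsum_factoredNumbers hf.summable, ← hf.tsum_eq]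
  exact hf.summable.tsum_subtype_le _ _ fun n => inv_nonneg.2 (sq_nonneg _)

lemma sq_le_pi_sq_div_six_mul_totient_mul_sigma {a : ℕ} (ha : Squarefree a) :
    (a : ℝ) ^ 2 ≤ π ^ 2 / 6 * (φ a * σ 1 a) := by
  have hprime : ∀ p ∈ a.primeFactors, p.Prime := fun p hp => Nat.prime_of_mem_primeFactors hp
  have hfactor : ∀ p ∈ a.primeFactors,
      (p : ℝ) ^ 2 = (1 - ((p : ℝ) ^ 2)⁻¹)⁻¹ * (((p - 1 : ℕ) : ℝ) * ((p + 1 : ℕ) : ℝ)) := by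
    intro p hp
    have hp1 : (1 : ℝ) < p := by exact_mod_cast (hprime p hp).one_lt
    have hne : (p : ℝ) ^ 2 - 1 ≠ 0 := by nlinarith
    rw [show 1 - ((p : ℝ) ^ 2)⁻¹ = ((p : ℝ) ^ 2 - 1) / p ^ 2 by field_simp, inv_div,
      Nat.cast_sub (hprime p hp).one_le, Nat.cast_add, Nat.cast_one]
    field_simp
    ring
  rw [Nat.totient_eq_prod_primeFactors_sub_one ha, sigma_one_eq_prod_primeFactors_add_one ha,
    Nat.cast_prod, Nat.cast_prod, ← prod_mul_distrib]
  conv_lhs => rw [← Nat.prod_primeFactors_of_squarefree ha, Nat.cast_prod, ← prod_pow,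
    prod_congr rfl hfactor, prod_mul_distrib]
  have := prod_filter_prime_inv_one_sub_inv_sq_le a.primeFactors
  rw [filter_true_of_mem hprime] at this
  exact mul_le_mul_of_nonneg_right this (by positivity)

lemma moebius_sq_div_totient_sq_le (a : ℕ) :
    (moebius a : ℝ) ^ 2 / φ (a ^ 2) ≤ π ^ 2 / 6 * (σ 1 a / a ^ 3) := by
  by_cases ha : Squarefree a
  · have hφ : (0 : ℝ) < φ a := by exact_mod_cast Nat.totient_pos.2 (Nat.pos_of_ne_zero ha.ne_zero)
    have ha0 : (0 : ℝ) < a := by exact_mod_cast Nat.pos_of_ne_zero ha.ne_zero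
    rw [← Int.cast_pow, moebius_sq_eq_one_of_squarefree ha, Int.cast_one, Nat.totient_sq,
      Nat.cast_mul, ← mul_div_assoc, div_le_div_iff₀ (by positivity) (by positivity)]
    nlinarith [sq_le_pi_sq_div_six_mul_totient_mul_sigma ha]
  · rw [moebius_eq_zero_of_not_squarefree ha, Int.cast_zero, zero_pow two_ne_zero, zero_div]
    positivity

lemma sigma_one_div_pow_three_eq_sum (a : ℕ) :
    (σ 1 a : ℝ) / a ^ 3 = ∑ p ∈ a.divisorsAntidiagonal, 1 / ((p.1 : ℝ) ^ 3 * p.2 ^ 2) := by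
  rw [sigma_one_apply, Nat.cast_sum, sum_div,
    ← Nat.sum_divisorsAntidiagonal' (fun m d => (d : ℝ) / a ^ 3)]
  refine sum_congr rfl fun p hp => ?_
  obtain ⟨hmul, -⟩ := Nat.mem_divisorsAntidiagonal.1 hp
  obtain ⟨hm, hd⟩ := Nat.ne_zero_of_mem_divisorsAntidiagonal hp
  rw [← hmul]
  push_cast
  field_simp

end Arithmetic

section DoubleSum

open Finset

lemma HasSum.sum_divisorsAntidiagonal {α : Type*} [NormedAddCommGroup α] [CompleteSpace α]
    {f : ℕ × ℕ → α} {s : α} (hf : HasSum f s) (hf0 : ∀ p : ℕ × ℕ, p.1 * p.2 = 0 → f p = 0) :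
    HasSum (fun n : ℕ => ∑ p ∈ n.divisorsAntidiagonal, f p) s := by
  convert hf.tsum_fiberwise (fun p => p.1 * p.2) with n
  rcases eq_or_ne n 0 with rfl | hn
  · rw [Nat.divisorsAntidiagonal_zero, sum_empty,
      tsum_congr fun p : (fun p : ℕ × ℕ => p.1 * p.2) ⁻¹' {0} => hf0 p.1 p.2, tsum_zero]
  · rw [show (fun p : ℕ × ℕ => p.1 * p.2) ⁻¹' {n} = n.divisorsAntidiagonal by ext; simp [hn]]
    exact (Finset.tsum_subtype' _ f).symm

lemma tsum_one_div_add_sq_le {c : ℝ} (hc : 1 / 2 < c) :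
    ∑' i : ℕ, 1 / ((i : ℝ) + c) ^ 2 ≤ 1 / (c - 1 / 2) := by
  set H : ℕ → ℝ := fun i => 1 / ((i : ℝ) + c - 1 / 2)
  have hH : ∀ i, 0 ≤ H i := fun i =>
    one_div_nonneg.2 (by linarith [i.cast_nonneg (α := ℝ)])
  refine Real.tsum_le_of_sum_range_le (fun i => by positivity) fun n => ?_
  calc ∑ i ∈ range n, 1 / ((i : ℝ) + c) ^ 2
      ≤ ∑ i ∈ range n, (H i - H (i + 1)) := by
        refine sum_le_sum fun i _ => ?_
        have hi : 1 / 2 < (i : ℝ) + c := by linarith [i.cast_nonneg (α := ℝ)]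
        -- `1 / x ^ 2 ≤ 1 / (x - 1/2) - 1 / (x + 1/2) = 1 / (x ^ 2 - 1/4)`
        simp only [H, Nat.cast_succ]
        rw [div_sub_div _ _ (by linarith) (by linarith), div_le_div_iff₀ (by positivity)
          (by nlinarith)]
        nlinarith
    _ = H 0 - H n := sum_range_sub' H n
    _ ≤ 1 / (c - 1 / 2) := by simp only [H, Nat.cast_zero, zero_add]; linarith [hH n]

lemma tsum_ite_le_one_div_sq_le {k : ℕ} (hk : 0 < k) :
    ∑' d : ℕ, (if k ≤ d then 1 / (d : ℝ) ^ 2 else 0) ≤ 1 / ((k : ℝ) - 1 / 2) := by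
  have hsum : Summable fun d : ℕ => if k ≤ d then 1 / (d : ℝ) ^ 2 else 0 :=
    (Real.summable_one_div_nat_pow.2 one_lt_two).of_nonneg_of_le
      (fun d => by split_ifs <;> positivity) fun d => by split_ifs <;> simp
  rw [← hsum.sum_add_tsum_nat_add k, sum_eq_zero fun d hd => if_neg (by simpa using hd),
    zero_add]
  have hk' : (1 : ℝ) / 2 < k := by linarith [show (1 : ℝ) ≤ k by exact_mod_cast hk]
  simpa [Nat.cast_add] using tsum_one_div_add_sq_le hk'

noncomputable def tailMajorant (N m : ℕ) : ℝ :=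
  if m ≤ N then 1 / ((N : ℝ) * m ^ 2) + 1 / ((N : ℝ) ^ 2 * m) else 2 / ((N : ℝ) * m ^ 2)

lemma tsum_ite_lt_mul_one_div_le {N : ℕ} (hN : 0 < N) (m : ℕ) :
    ∑' d : ℕ, (if N < m * d then 1 / ((m : ℝ) ^ 3 * d ^ 2) else 0) ≤ tailMajorant N m := by
  rcases Nat.eq_zero_or_pos m with rfl | hm
  · simp [tailMajorant]
  set k := N / m + 1
  have hk : ∀ d, N < m * d ↔ k ≤ d := fun d => by
    rw [Nat.add_one_le_iff, Nat.div_lt_iff_lt_mul hm, mul_comm]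
  have hNk : (N : ℝ) < m * k := by exact_mod_cast Nat.lt_mul_div_succ N hm
  have hk1 : (1 : ℝ) ≤ k := by exact_mod_cast Nat.le_add_left 1 (N / m)
  have hNR : (0 : ℝ) < N := by exact_mod_cast hN
  have hmR : (0 : ℝ) < m := by exact_mod_cast hm
  have hsplit : ∀ d, (if N < m * d then 1 / ((m : ℝ) ^ 3 * d ^ 2) else 0) =
      1 / (m : ℝ) ^ 3 * (if k ≤ d then 1 / (d : ℝ) ^ 2 else 0) := fun d => by
    simp only [hk, mul_ite, mul_zero, one_div_mul_one_div]
  -- with `r = 1 / k`: `1 / (k - 1/2) ≤ r + r ^ 2`, where `r ≤ 1` and `r < m / N`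
  have hr : 1 / ((k : ℝ) - 1 / 2) ≤ 1 / k + (1 / k) ^ 2 := by
    rw [show 1 / (k : ℝ) + (1 / k) ^ 2 = (k + 1) / k ^ 2 by field_simp,
      div_le_div_iff₀ (by linarith) (by positivity)]
    nlinarith
  have hr1 : 1 / (k : ℝ) ≤ 1 := (div_le_one (by positivity)).2 hk1
  have hrm : 1 / (k : ℝ) ≤ m / N := by
    rw [div_le_div_iff₀ (by positivity) hNR]; linarith
  rw [tsum_congr hsplit, tsum_mul_left]
  refine (mul_le_mul_of_nonneg_left ((tsum_ite_le_one_div_sq_le (Nat.succ_pos _)).trans hr)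
    (by positivity)).trans ?_
  unfold tailMajorant
  split_ifs with hmN
  · calc 1 / (m : ℝ) ^ 3 * (1 / k + (1 / k) ^ 2) ≤ 1 / (m : ℝ) ^ 3 * (m / N + (m / N) ^ 2) := by
          gcongr
      _ = 1 / ((N : ℝ) * m ^ 2) + 1 / ((N : ℝ) ^ 2 * m) := by field_simp
  · calc 1 / (m : ℝ) ^ 3 * (1 / k + (1 / k) ^ 2) ≤ 1 / (m : ℝ) ^ 3 * (m / N + m / N) := by
          gcongr
          exact (pow_le_of_le_one (by positivity) hr1 two_ne_zero).trans hrm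
      _ = 2 / ((N : ℝ) * m ^ 2) := by field_simp; ring

lemma summable_tailMajorant (N : ℕ) : Summable (tailMajorant N) := by
  refine ((Real.summable_one_div_nat_pow.2 one_lt_two).mul_left (2 / (N : ℝ))).of_nonneg_of_le
    (fun m => by unfold tailMajorant; split_ifs <;> positivity) fun m => ?_
  rcases Nat.eq_zero_or_pos m with rfl | hm
  · simp [tailMajorant]
  have hmR : (0 : ℝ) < m := by exact_mod_cast hm
  unfold tailMajorant
  split_ifs with hmN
  · have hmN' : (m : ℝ) ≤ N := by exact_mod_cast hmN
    have hNR : (0 : ℝ) < N := hmR.trans_le hmN'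
    rw [div_add_div _ _ (by positivity) (by positivity), div_le_iff₀ (by positivity)]
    field_simp
    nlinarith
  · rw [div_mul_div_comm, mul_one]

lemma sum_range_succ_one_div_le_one_add_log (N : ℕ) :
    ∑ m ∈ range (N + 1), 1 / (m : ℝ) ≤ 1 + log N := by
  rw [sum_range_succ', Nat.cast_zero, div_zero, add_zero]
  simpa [harmonic, one_div] using harmonic_le_one_add_log N

lemma tsum_tailMajorant_le {N : ℕ} (hN : 0 < N) :
    ∑' m, tailMajorant N m ≤ (π ^ 2 / 6 + (3 + log N) / N) / N := by
  have hNR : (0 : ℝ) < N := by exact_mod_cast hN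
  rw [← (summable_tailMajorant N).sum_add_tsum_nat_add (N + 1)]
  have hhead : ∀ m ∈ range (N + 1),
      tailMajorant N m = 1 / N * (1 / (m : ℝ) ^ 2) + 1 / N ^ 2 * (1 / m) := fun m hm => by
    simp only [tailMajorant, if_pos (Nat.lt_succ_iff.1 (mem_range.1 hm)), one_div_mul_one_div]
  have htail : ∀ i : ℕ, tailMajorant N (i + (N + 1)) = 2 / N * (1 / ((i : ℝ) + (N + 1)) ^ 2) :=
    fun i => by
      simp only [tailMajorant, if_neg (by omega : ¬ i + (N + 1) ≤ N)]
      push_cast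
      field_simp
  rw [sum_congr rfl hhead, sum_add_distrib, ← mul_sum, ← mul_sum, tsum_congr htail, tsum_mul_left]
  have hζ := sum_le_hasSum (range (N + 1)) (fun m _ => by positivity) hasSum_zeta_two
  have hH := sum_range_succ_one_div_le_one_add_log N
  have hT := tsum_one_div_add_sq_le (by linarith : (1 : ℝ) / 2 < N + 1)
  calc 1 / (N : ℝ) * ∑ m ∈ range (N + 1), 1 / (m : ℝ) ^ 2 +
        1 / (N : ℝ) ^ 2 * ∑ m ∈ range (N + 1), 1 / (m : ℝ) +
        2 / N * ∑' i : ℕ, 1 / ((i : ℝ) + (N + 1)) ^ 2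
      ≤ 1 / N * (π ^ 2 / 6) + 1 / N ^ 2 * (1 + log N) + 2 / N * (1 / (N + 1 - 1 / 2)) := by
        gcongr
    _ ≤ 1 / N * (π ^ 2 / 6) + 1 / N ^ 2 * (1 + log N) + 2 / N ^ 2 := by
        gcongr
        rw [div_mul_div_comm, div_le_div_iff₀ (mul_pos hNR (by linarith)) (by positivity)]
        nlinarith
    _ = (π ^ 2 / 6 + (3 + log N) / N) / N := by field_simp; ring

lemma summable_ite_lt_mul (N : ℕ) : Summable fun p : ℕ × ℕ =>
    if N < p.1 * p.2 then 1 / ((p.1 : ℝ) ^ 3 * p.2 ^ 2) else 0 := by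
  refine ((Real.summable_one_div_nat_pow.2 (by norm_num : 1 < 3)).mul_of_nonneg
    (Real.summable_one_div_nat_pow.2 one_lt_two) (fun _ => by positivity)
    fun _ => by positivity).of_nonneg_of_le (fun p => by split_ifs <;> positivity) fun p => ?_
  split_ifs
  · rw [one_div_mul_one_div]
  · positivity

lemma tsum_ite_lt_mul_le {N : ℕ} (hN : 0 < N) :
    ∑' p : ℕ × ℕ, (if N < p.1 * p.2 then 1 / ((p.1 : ℝ) ^ 3 * p.2 ^ 2) else 0) ≤
      (π ^ 2 / 6 + (3 + log N) / N) / N :=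
  calc ∑' p : ℕ × ℕ, (if N < p.1 * p.2 then 1 / ((p.1 : ℝ) ^ 3 * p.2 ^ 2) else 0)
      = ∑' (m : ℕ) (d : ℕ), (if N < m * d then 1 / ((m : ℝ) ^ 3 * d ^ 2) else 0) :=
        (summable_ite_lt_mul N).tsum_prod
    _ ≤ ∑' m, tailMajorant N m := (summable_ite_lt_mul N).prod.tsum_le_tsum
        (tsum_ite_lt_mul_one_div_le hN) (summable_tailMajorant N)
    _ ≤ (π ^ 2 / 6 + (3 + log N) / N) / N := tsum_tailMajorant_le hN

end DoubleSum

section TailSum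

open ArithmeticFunction
open scoped Nat ArithmeticFunction.sigma

lemma tsum_moebius_sq_div_totient_sq_le {N : ℕ} (hN : 0 < N) :
    ∑' a : {a : ℕ // N < a}, (moebius a : ℝ) ^ 2 / φ (a ^ 2 : ℕ) ≤
      π ^ 2 / 6 * ((π ^ 2 / 6 + (3 + Real.log N) / N) / N) := by
  set g : ℕ × ℕ → ℝ := fun p => if N < p.1 * p.2 then 1 / ((p.1 : ℝ) ^ 3 * p.2 ^ 2) else 0
  have hg : HasSum (fun a : ℕ => ∑ p ∈ a.divisorsAntidiagonal, g p) (∑' p, g p) :=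
    (summable_ite_lt_mul N).hasSum.sum_divisorsAntidiagonal fun p hp => by simp [hp]
  have hterm : ∀ a : ℕ, {a : ℕ | N < a}.indicator (fun a : ℕ => (moebius a : ℝ) ^ 2 / φ (a ^ 2)) a
      ≤ π ^ 2 / 6 * ∑ p ∈ a.divisorsAntidiagonal, g p := fun a => by
    by_cases ha : N < a
    · rw [Set.indicator_of_mem (show a ∈ {a : ℕ | N < a} from ha), Finset.sum_congr rfl
        fun p hp => if_pos ((Nat.mem_divisorsAntidiagonal.1 hp).1 ▸ ha),
        ← sigma_one_div_pow_three_eq_sum]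
      exact moebius_sq_div_totient_sq_le a
    · rw [Set.indicator_of_notMem (show a ∉ {a : ℕ | N < a} from ha)]
      exact mul_nonneg (by positivity)
        (Finset.sum_nonneg fun p _ => by simp only [g]; split_ifs <;> positivity)
  have hsum := hg.summable.mul_left (π ^ 2 / 6)
  refine (tsum_subtype {a : ℕ | N < a} fun a : ℕ => (moebius a : ℝ) ^ 2 / φ (a ^ 2)).trans_le ?_
  calc ∑' a : ℕ, {a : ℕ | N < a}.indicator (fun a : ℕ => (moebius a : ℝ) ^ 2 / φ (a ^ 2)) a
      ≤ ∑' a : ℕ, π ^ 2 / 6 * ∑ p ∈ a.divisorsAntidiagonal, g p :=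
        (hsum.of_nonneg_of_le (Set.indicator_nonneg fun a _ => by positivity) hterm).tsum_le_tsum
          hterm hsum
    _ ≤ π ^ 2 / 6 * ((π ^ 2 / 6 + (3 + Real.log N) / N) / N) := by
        rw [tsum_mul_left, hg.tsum_eq]
        gcongr
        exact tsum_ite_lt_mul_le hN

end TailSum

section Integral

open MeasureTheory Set

lemma integrableOn_Ioi_one_div_sq {c : ℝ} (hc : 0 < c) :
    IntegrableOn (fun t : ℝ => 1 / t ^ 2) (Ioi c) := by
  refine (integrableOn_Ioi_rpow_of_lt (by norm_num : (-2 : ℝ) < -1) hc).congr_fun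
    (fun t ht => ?_) measurableSet_Ioi
  simp [rpow_neg (hc.trans ht).le]

lemma integral_Ioi_one_div_sq {c : ℝ} (hc : 0 < c) :
    ∫ t in Ioi c, 1 / t ^ 2 = 1 / c := by
  rw [← setIntegral_congr_fun measurableSet_Ioi (fun t (ht : c < t) => by
    simp [rpow_neg (hc.trans ht).le] : EqOn (fun t : ℝ => t ^ (-2 : ℝ)) _ _),
    integral_Ioi_rpow_of_lt (by norm_num) hc]
  norm_num [rpow_neg_one]

lemma integrableOn_Ioi_log_log_div_sq {c : ℝ} (hc : exp 1 ≤ c) :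
    IntegrableOn (fun t : ℝ => log (log t) / t ^ 2) (Ioi c) := by
  have hc0 : 0 < c := (exp_pos 1).trans_le hc
  refine ((integrableOn_Ioi_rpow_of_lt (by norm_num : (-3 / 2 : ℝ) < -1) hc0).const_mul 2).mono'
    ((measurable_log.comp measurable_log).div (measurable_id.pow_const 2)).aestronglyMeasurable
    ((ae_restrict_iff' measurableSet_Ioi).2 (ae_of_all _ fun t (ht : c < t) => ?_))
  have ht0 : 0 < t := hc0.trans ht
  have hlog : 1 ≤ log t := by rw [le_log_iff_exp_le ht0]; linarith
  -- `0 ≤ log (log t) ≤ log t ≤ 2 √t`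
  have hll : log (log t) ≤ 2 * t ^ (1 / 2 : ℝ) := by
    have := log_le_rpow_div ht0.le (by norm_num : (0 : ℝ) < 1 / 2)
    linarith [log_le_self (by linarith : (0 : ℝ) ≤ log t)]
  rw [norm_of_nonneg (by have := log_nonneg hlog; positivity),
    show (-3 / 2 : ℝ) = 1 / 2 - (2 : ℕ) by norm_num, rpow_sub_natCast ht0.ne', mul_div_assoc']
  gcongr

lemma div_le_setIntegral_Ioi_log_log {A B c : ℝ} (hA : 0 ≤ A) (hc : exp 1 ≤ c) :
    (B + A * log (log c)) / c ≤ ∫ t in Ioi c, (A * log (log t) / t ^ 2 + B / t ^ 2) := by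
  have hc0 : 0 < c := (exp_pos 1).trans_le hc
  have hint : IntegrableOn (fun t : ℝ => A * log (log t) / t ^ 2 + B / t ^ 2) (Ioi c) :=
    IntegrableOn.congr_fun (((integrableOn_Ioi_log_log_div_sq hc).const_mul A).add
      ((integrableOn_Ioi_one_div_sq hc0).const_mul B))
      (fun t _ => by simp only [Pi.add_apply]; ring) measurableSet_Ioi
  rw [div_eq_mul_one_div, ← integral_Ioi_one_div_sq hc0, ← integral_const_mul]
  refine setIntegral_mono_on ((integrableOn_Ioi_one_div_sq hc0).const_mul _) hint
    measurableSet_Ioi fun t (ht : c < t) => ?_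
  have hlogc : 1 ≤ log c := by rw [le_log_iff_exp_le hc0]; exact hc
  have hlog : log (log c) ≤ log (log t) := log_le_log (by linarith) (log_le_log hc0 ht.le)
  calc (B + A * log (log c)) * (1 / t ^ 2) ≤ (B + A * log (log t)) * (1 / t ^ 2) := by gcongr
    _ = A * log (log t) / t ^ 2 + B / t ^ 2 := by ring

end Integral

lemma pi_sq_div_six_mul_le_three_add_exp_mul_log_log {N : ℕ} (hN : 8 ≤ N) :
    π ^ 2 / 6 * (π ^ 2 / 6 + (3 + log N) / N) ≤ 3 + exp eulerMascheroniConstant * log (log N) := by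
  have hNR : (8 : ℝ) ≤ N := by exact_mod_cast hN
  have hπ : π ^ 2 / 6 < 1.66 := by nlinarith [pi_lt_d2, pi_pos]
  have hlog8 : log 8 = 3 * log 2 := by
    rw [show (8 : ℝ) = 2 ^ 3 by norm_num, log_pow, Nat.cast_ofNat]
  have hlogN : log N / N ≤ log 8 / 8 :=
    log_div_self_antitoneOn (by simp only [Set.mem_Ici]; linarith [exp_one_lt_d9])
      (by simp only [Set.mem_Ici]; linarith [exp_one_lt_d9]) hNR
  have h3N : 3 / (N : ℝ) ≤ 3 / 8 := by gcongr
  have hγ : 1.5 ≤ exp eulerMascheroniConstant := by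
    linarith [add_one_le_exp eulerMascheroniConstant, one_half_lt_eulerMascheroniConstant]
  have hloglog : log 2 ≤ log (log N) := by
    refine log_le_log two_pos ?_
    calc (2 : ℝ) ≤ log 8 := by linarith [log_two_gt_d9]
      _ ≤ log N := log_le_log (by norm_num) hNR
  have hfrac : (3 + log N) / N ≤ 3 / 8 + log 8 / 8 := by rw [add_div]; linarith
  have : 0 ≤ (3 + log N) / N := by
    have := log_nonneg (by linarith : (1 : ℝ) ≤ N); positivity
  nlinarith [log_two_lt_d9, log_two_gt_d9, pi_pos]

open ArithmeticFunction Real in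
theorem moebius_totient_tail_sum_le_integral (x : ℝ) (hx : 8 ≤ x) :
    ∑' a : {a : ℕ // x < (a : ℝ)}, ((moebius a : ℝ)) ^ 2 / (Nat.totient ((a : ℕ) ^ 2)) ≤
      ∫ t in Set.Ioi ((⌊x⌋₊ : ℝ)),
        (Real.exp eulerMascheroniConstant * Real.log (Real.log t) / t ^ 2 + 3 / t ^ 2) := by
  set N := ⌊x⌋₊
  have hN : 8 ≤ N := Nat.le_floor (by exact_mod_cast hx)
  have hNR : (8 : ℝ) ≤ N := by exact_mod_cast hN
  calc ∑' a : {a : ℕ // x < (a : ℝ)}, ((moebius a : ℝ)) ^ 2 / (Nat.totient ((a : ℕ) ^ 2))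
      = ∑' a : {a : ℕ // N < a}, ((moebius a : ℝ)) ^ 2 / (Nat.totient ((a : ℕ) ^ 2)) :=
        ((Equiv.subtypeEquivRight fun a => Nat.floor_lt (by linarith)).tsum_eq _).symm
    _ ≤ π ^ 2 / 6 * ((π ^ 2 / 6 + (3 + Real.log N) / N) / N) :=
        tsum_moebius_sq_div_totient_sq_le (by omega)
    _ ≤ (3 + exp eulerMascheroniConstant * Real.log (Real.log N)) / N := by
        rw [← mul_div_assoc]
        gcongr
        exact pi_sq_div_six_mul_le_three_add_exp_mul_log_log hN
    _ ≤ _ := div_le_setIntegral_Ioi_log_log (exp_pos _).le (by linarith [exp_one_lt_d9])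
end

section
/- Suppose that for all real y ≥ e^{10}, one has the bound ∑_{p ≤ y} 1/p ≤ log log y + M + 2/(√y · log y), where M is the Meissel–Mertens constant and the sum is over primes. Then for all x with e^{10} ≤ x ≤ 10^{12}, ∑_{p < x} 1/p ≤ log log x + M + 1.445·10^{-2}/log x. -/
open Real

-- `2 / 1.445e-2 ≈ 138.4`, so `√x ≥ e⁵ > 139` is what turns the error term `2 / (√x log x)`
-- into `1.445e-2 / log x`.
lemma lt_exp_five : (139 : ℝ) < exp 5 := by
  have h : exp 5 = exp 1 ^ 5 := by rw [← exp_nat_mul]; norm_num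
  rw [h]
  calc (139 : ℝ) < 2.7182818283 ^ 5 := by norm_num
    _ < exp 1 ^ 5 := by gcongr; exact exp_one_gt_d9

lemma exp_five_le_sqrt {x : ℝ} (hx : exp 10 ≤ x) : exp 5 ≤ √x := by
  rw [le_sqrt' (exp_pos 5), ← exp_nat_mul]
  norm_num [hx]

lemma two_div_sqrt_mul_log_le {x : ℝ} (hx : exp 10 ≤ x) :
    2 / (√x * log x) ≤ 1.445e-2 / log x := by
  have hlog : 0 < log x := by
    have := log_le_log (exp_pos 10) hx
    rw [log_exp] at this
    linarith
  have hsqrt : 139 < √x := lt_exp_five.trans_le (exp_five_le_sqrt hx)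
  rw [div_le_div_iff₀ (by positivity) hlog, ← mul_assoc]
  gcongr
  linarith

lemma sum_one_div_prime_lt_le_sum_one_div_prime_le (n : ℕ) (x : ℝ) :
    ∑ p ∈ (Finset.range n).filter (fun p : ℕ => p.Prime ∧ (p : ℝ) < x), 1 / (p : ℝ) ≤
      ∑ p ∈ (Finset.range n).filter (fun p : ℕ => p.Prime ∧ (p : ℝ) ≤ x), 1 / (p : ℝ) :=
  Finset.sum_le_sum_of_subset_of_nonneg
    (Finset.monotone_filter_right _ fun _ _ hp => ⟨hp.1, hp.2.le⟩)
    fun _ _ _ => by positivity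

theorem mertens_upper_bound (M : ℝ)
    (h : ∀ y : ℝ, Real.exp 10 ≤ y →
      ∑ p ∈ (Finset.range (⌊y⌋₊ + 1)).filter (fun p : ℕ => p.Prime ∧ (p : ℝ) ≤ y), 1 / (p : ℝ) ≤
        Real.log (Real.log y) + M + 2 / (Real.sqrt y * Real.log y)) :
    ∀ x : ℝ, Real.exp 10 ≤ x → x ≤ 10 ^ 12 →
      ∑ p ∈ (Finset.range (⌊x⌋₊ + 1)).filter (fun p : ℕ => p.Prime ∧ (p : ℝ) < x), 1 / (p : ℝ) ≤
        Real.log (Real.log x) + M + 1.445e-2 / Real.log x := by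
  intro x hx _
  linarith [sum_one_div_prime_lt_le_sum_one_div_prime_le (⌊x⌋₊ + 1) x, h x hx,
    two_div_sqrt_mul_log_le hx]
end

section
/- Suppose e^{8.9} < u < z, ∑_{p < z} 1/p − ∑_{p < u} 1/p ≤ log log z − log log u + ε for some ε with 0 < ε ≤ 1/10, and ∑_{p ≥ u} 1/p² ≤ S. Then ∏_{u ≤ p < z} (1 − 1/p)^{-1} ≤ (log z / log u) · exp(ε) · exp(0.54·S), where products and sums are over primes. -/
/-!
Write the product as `exp (∑ -log (1 - 1/p))` and use `-log (1 - x) ≤ x + 0.54 x²` for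
`0 ≤ x ≤ 1/10` (here `x = 1/p` with `p > e^{8.9}`). The linear terms sum to at most
`log log z - log log u + ε` and the quadratic ones to at most `0.54 S`; exponentiating gives the bound.
-/

open Finset Real

lemma neg_log_one_sub_le {x : ℝ} (hx0 : 0 ≤ x) (hx : x ≤ 1 / 10) :
    -log (1 - x) ≤ x + 0.54 * x ^ 2 := by
  have habs : |x| = x := abs_of_nonneg hx0
  -- Four terms of the Taylor series: the tail `x³/3 + x⁴/4 + x⁵/(1-x)` is `≤ 0.037 x²`.
  have htaylor := abs_log_sub_add_sum_range_le (x := x) (by rw [habs]; linarith) 4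
  simp only [sum_range_succ, sum_range_zero, habs] at htaylor
  have htail : x ^ 5 / (1 - x) ≤ x ^ 2 / 900 := by
    rw [div_le_iff₀ (by linarith)]
    have : x ^ 3 ≤ (1 / 10) ^ 3 := pow_le_pow_left₀ hx0 hx 3
    nlinarith [sq_nonneg x, pow_nonneg hx0 3]
  have hcube : x ^ 3 ≤ x ^ 2 / 10 := by nlinarith [sq_nonneg x]
  have hquart : x ^ 4 ≤ x ^ 2 / 100 := by nlinarith [sq_nonneg x, pow_nonneg hx0 3]
  norm_num at htaylor
  rw [show (0.54 : ℝ) = 27 / 50 by norm_num]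
  linarith [(abs_le.mp htaylor).1, sq_nonneg x]

lemma prod_inv_one_sub_le_exp {ι : Type*} (s : Finset ι) (a : ι → ℝ)
    (ha0 : ∀ i ∈ s, 0 ≤ a i) (ha : ∀ i ∈ s, a i ≤ 1 / 10) :
    ∏ i ∈ s, (1 - a i)⁻¹ ≤ exp (∑ i ∈ s, a i + 0.54 * ∑ i ∈ s, a i ^ 2) := by
  have hexp : ∏ i ∈ s, (1 - a i)⁻¹ = exp (∑ i ∈ s, -log (1 - a i)) := by
    rw [exp_sum]
    refine prod_congr rfl fun i hi => ?_
    rw [exp_neg, exp_log (by linarith [ha i hi])]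
  rw [hexp, mul_sum, ← sum_add_distrib]
  exact exp_le_exp.mpr (sum_le_sum fun i hi => neg_log_one_sub_le (ha0 i hi) (ha i hi))

lemma sum_primes_lt_eq_add {M : Type*} [AddCommMonoid M] (f : ℕ → M) {u z : ℝ} (huz : u ≤ z) :
    ∑ p ∈ (range ⌈z⌉₊).filter (fun p : ℕ => p.Prime ∧ (p : ℝ) < z), f p =
      ∑ p ∈ (range ⌈z⌉₊).filter (fun p : ℕ => p.Prime ∧ u ≤ (p : ℝ) ∧ (p : ℝ) < z), f p +
        ∑ p ∈ (range ⌈u⌉₊).filter (fun p : ℕ => p.Prime ∧ (p : ℝ) < u), f p := by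
  rw [← sum_filter_add_sum_filter_not _ (fun p : ℕ => u ≤ (p : ℝ)), filter_filter, filter_filter]
  congr 2 <;> ext p <;> simp only [mem_filter, mem_range, Nat.lt_ceil, not_le]
  · tauto
  · constructor
    · rintro ⟨-, ⟨hp, -⟩, hpu⟩
      exact ⟨hpu, hp, hpu⟩
    · rintro ⟨hpu, hp, -⟩
      exact ⟨by linarith, ⟨hp, by linarith⟩, hpu⟩

lemma sum_le_tsum_subtype {α : Type*} {f : α → ℝ} (hf : Summable f) (hf0 : ∀ a, 0 ≤ f a)
    {P : α → Prop} [DecidablePred P] (s : Finset α) (hs : ∀ a ∈ s, P a) :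
    ∑ a ∈ s, f a ≤ ∑' a : {a // P a}, f a := by
  rw [← filter_true_of_mem hs, ← sum_subtype_eq_sum_filter]
  exact (hf.subtype _).sum_le_tsum _ fun a _ => hf0 a

theorem prime_prod_interval_bound_general (u z ε S : ℝ) (hu : Real.exp 8.9 < u) (huz : u < z)
    (hsum : (∑ p ∈ (Finset.range ⌈z⌉₊).filter (fun p : ℕ => p.Prime ∧ (p : ℝ) < z), 1 / (p : ℝ)) -
        (∑ p ∈ (Finset.range ⌈u⌉₊).filter (fun p : ℕ => p.Prime ∧ (p : ℝ) < u), 1 / (p : ℝ)) ≤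
      Real.log (Real.log z) - Real.log (Real.log u) + ε)
    (hS : (∑' p : {p : ℕ // p.Prime ∧ u ≤ (p : ℝ)}, 1 / (p : ℝ) ^ 2) ≤ S) :
    (∏ p ∈ (Finset.range ⌈z⌉₊).filter (fun p : ℕ => p.Prime ∧ u ≤ (p : ℝ) ∧ (p : ℝ) < z),
        (1 - 1 / (p : ℝ))⁻¹) ≤
      Real.log z / Real.log u * Real.exp ε * Real.exp (0.54 * S) := by
  set F := (range ⌈z⌉₊).filter (fun p : ℕ => p.Prime ∧ u ≤ (p : ℝ) ∧ (p : ℝ) < z)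
  have hu' : 9.9 < u := by linarith [add_one_le_exp 8.9]
  have hF : ∀ p ∈ F, p.Prime ∧ u ≤ (p : ℝ) ∧ (p : ℝ) < z := fun p hp => (mem_filter.mp hp).2
  have hinv : ∀ p ∈ F, 1 / (p : ℝ) ≤ 1 / 10 := fun p hp => by
    have h9 : 9 < p := by exact_mod_cast (by linarith [(hF p hp).2.1] : (9 : ℝ) < p)
    have h10 : (10 : ℝ) ≤ p := by exact_mod_cast h9
    gcongr
  have hlin : ∑ p ∈ F, 1 / (p : ℝ) ≤ log (log z) - log (log u) + ε := by
    rw [sum_primes_lt_eq_add _ huz.le] at hsum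
    linarith
  have hquad : ∑ p ∈ F, (1 / (p : ℝ)) ^ 2 ≤ S := by
    simp only [div_pow, one_pow]
    exact (sum_le_tsum_subtype (Real.summable_one_div_nat_pow.mpr one_lt_two)
      (fun n => by positivity) F fun p hp => ⟨(hF p hp).1, (hF p hp).2.1⟩).trans hS
  have hlogu : 0 < log u := log_pos (by linarith)
  have hlogz : 0 < log z := log_pos (by linarith)
  calc ∏ p ∈ F, (1 - 1 / (p : ℝ))⁻¹
      ≤ exp (∑ p ∈ F, 1 / (p : ℝ) + 0.54 * ∑ p ∈ F, (1 / (p : ℝ)) ^ 2) :=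
        prod_inv_one_sub_le_exp F _ (fun p _ => by positivity) hinv
    _ ≤ exp (log (log z) - log (log u) + ε + 0.54 * S) := by gcongr
    _ = log z / log u * exp ε * exp (0.54 * S) := by
        rw [exp_add, exp_add, exp_sub, exp_log hlogz, exp_log hlogu]

theorem prime_prod_interval_bound (u z ε S : ℝ) (hu : Real.exp 8.9 < u) (huz : u < z)
    (hε : 0 < ε) (hε' : ε ≤ 1 / 10)
    (hsum : (∑ p ∈ (Finset.range ⌈z⌉₊).filter (fun p : ℕ => p.Prime ∧ (p : ℝ) < z), 1 / (p : ℝ)) -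
        (∑ p ∈ (Finset.range ⌈u⌉₊).filter (fun p : ℕ => p.Prime ∧ (p : ℝ) < u), 1 / (p : ℝ)) ≤
      Real.log (Real.log z) - Real.log (Real.log u) + ε)
    (hS : (∑' p : {p : ℕ // p.Prime ∧ u ≤ (p : ℝ)}, 1 / (p : ℝ) ^ 2) ≤ S) :
    (∏ p ∈ (Finset.range ⌈z⌉₊).filter (fun p : ℕ => p.Prime ∧ u ≤ (p : ℝ) ∧ (p : ℝ) < z),
        (1 - 1 / (p : ℝ))⁻¹) ≤
      Real.log z / Real.log u * Real.exp ε * Real.exp (0.54 * S) :=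
  prime_prod_interval_bound_general u z ε S hu huz hsum hS
end
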